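/- Let R be a PID and T a finitely generated torsion R-module. Then Hom_R(T, Q(R)/R) is isomorphic to T, where Q(R) is the field of fractions of R. -/

import Mathlib

/-- The `R`-module `Q(R)/R`: the field of fractions of `R` modulo the image of `R`. -/
abbrev fractionsModOne (R : Type) [CommRing R] [IsDomain R] : Type :=
  (FractionRing R) ⧸ (LinearMap.range (Algebra.linearMap R (FractionRing R)))

/-!
By the structure theorem, `T ≅ ⨁ᵢ R ⧸ (aᵢ)` with `aᵢ ≠ 0`, so
`Hom(T, Q(R)/R) ≅ ∏ᵢ Hom(R ⧸ (aᵢ), Q(R)/R)`. A map out of `R ⧸ (a)` is its value at `1`, an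
arbitrary `a`-torsion element, and the `a`-torsion of `Q(R)/R` is `(a⁻¹R)/R ≅ R ⧸ (a)` via
`r ↦ r / a`.
-/

noncomputable def Submodule.homQuotSpanSingletonEquivTorsionBy {R N : Type} [CommRing R]
    [AddCommGroup N] [Module R N] (a : R) :
    ((R ⧸ R ∙ a) →ₗ[R] N) ≃ₗ[R] Submodule.torsionBy R N a where
  toFun f := ⟨f (Submodule.Quotient.mk 1), by
    rw [Submodule.mem_torsionBy_iff, ← f.map_smul, ← Submodule.Quotient.mk_smul, smul_eq_mul,
      mul_one, (Submodule.Quotient.mk_eq_zero _).mpr (Submodule.mem_span_singleton_self a),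
      f.map_zero]⟩
  map_add' _ _ := rfl
  map_smul' _ _ := rfl
  invFun x := Submodule.liftQSpanSingleton a (LinearMap.toSpanSingleton R N x) x.2
  left_inv f := by
    ext
    exact one_smul R _
  right_inv x := Subtype.ext (one_smul R _)

namespace fractionsModOne

variable {R : Type} [CommRing R] [IsDomain R]

noncomputable def divBy (a : R) : R →ₗ[R] fractionsModOne R :=
  (LinearMap.range (Algebra.linearMap R (FractionRing R))).mkQ ∘ₗ
    LinearMap.toSpanSingleton R (FractionRing R) (algebraMap R (FractionRing R) a)⁻¹

theorem divBy_apply (a r : R) :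
    divBy a r = Submodule.Quotient.mk (algebraMap R _ r / algebraMap R (FractionRing R) a) := by
  simp [divBy, Algebra.smul_def, div_eq_mul_inv]

theorem ker_divBy {a : R} (ha : a ≠ 0) : LinearMap.ker (divBy a) = R ∙ a := by
  have ha' : algebraMap R (FractionRing R) a ≠ 0 := mt IsFractionRing.to_map_eq_zero_iff.mp ha
  ext r
  simp only [LinearMap.mem_ker, divBy_apply, Submodule.Quotient.mk_eq_zero, LinearMap.mem_range,
    Algebra.linearMap_apply, eq_div_iff ha', ← map_mul,
    (IsFractionRing.injective R (FractionRing R)).eq_iff, Submodule.mem_span_singleton,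
    smul_eq_mul]

theorem range_divBy {a : R} (ha : a ≠ 0) :
    LinearMap.range (divBy a) = Submodule.torsionBy R (fractionsModOne R) a := by
  ext x
  constructor
  · rintro ⟨r, rfl⟩
    rw [Submodule.mem_torsionBy_iff, ← map_smul, ← LinearMap.mem_ker, ker_divBy ha]
    exact Submodule.mem_span_singleton.mpr ⟨r, mul_comm r a⟩
  · intro hx
    obtain ⟨x, rfl⟩ := Submodule.Quotient.mk_surjective _ x
    simp only [Submodule.mem_torsionBy_iff, ← Submodule.Quotient.mk_smul,
      Submodule.Quotient.mk_eq_zero, LinearMap.mem_range, Algebra.linearMap_apply,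
      Algebra.smul_def] at hx
    obtain ⟨r, hr⟩ := hx
    have ha' : algebraMap R (FractionRing R) a ≠ 0 := mt IsFractionRing.to_map_eq_zero_iff.mp ha
    exact ⟨r, by rw [divBy_apply, hr, mul_div_cancel_left₀ _ ha']⟩

noncomputable def torsionByEquivQuotSpanSingleton {a : R} (ha : a ≠ 0) :
    Submodule.torsionBy R (fractionsModOne R) a ≃ₗ[R] R ⧸ R ∙ a :=
  (LinearEquiv.ofEq _ _ (range_divBy ha)).symm ≪≫ₗ (divBy a).quotKerEquivRange.symm ≪≫ₗ
    Submodule.quotEquivOfEq _ _ (ker_divBy ha)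

noncomputable def homPiQuotSpanSingletonEquiv {ι : Type} [Fintype ι] [DecidableEq ι]
    {a : ι → R} (ha : ∀ i, a i ≠ 0) :
    ((∀ i, R ⧸ R ∙ a i) →ₗ[R] fractionsModOne R) ≃ₗ[R] ∀ i, R ⧸ R ∙ a i :=
  (LinearMap.lsum R _ R).symm ≪≫ₗ LinearEquiv.piCongrRight fun i =>
    Submodule.homQuotSpanSingletonEquivTorsionBy (a i) ≪≫ₗ
      torsionByEquivQuotSpanSingleton (ha i)

end fractionsModOne

/-- Over a PID `R` with field of fractions `Q(R)`, for a finitely generated torsion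
`R`-module `T`, the module `Hom_R(T, Q(R)/R)` is isomorphic to `T`. -/
theorem hom_into_fractionsModOne_iso_self
    (R : Type) [CommRing R] [IsDomain R] [IsPrincipalIdealRing R]
    (T : Type) [AddCommGroup T] [Module R T] [Module.Finite R T]
    (hT : Module.IsTorsion R T) :
    Nonempty ((T →ₗ[R] fractionsModOne R) ≃ₗ[R] T) := by
  classical
  obtain ⟨ι, _, p, hp, e, ⟨f⟩⟩ := Module.equiv_directSum_of_isTorsion hT
  let g : T ≃ₗ[R] ∀ i, R ⧸ R ∙ p i ^ e i :=
    f ≪≫ₗ DirectSum.linearEquivFunOnFintype R ι _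
  exact ⟨g.arrowCongr (LinearEquiv.refl R _) ≪≫ₗ
    fractionsModOne.homPiQuotSpanSingletonEquiv (fun i => pow_ne_zero _ (hp i).ne_zero) ≪≫ₗ
    g.symm⟩
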